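/- Let f₁ and f₂ be distinct feasible flows with respect to capacities μ and demands b. Then there exists a feasible flow f such that at least one of c'(f) < c'(f₁) or c'(f) < c'(f₂) holds, where cost vectors are compared lexicographically. -/

import Mathlib

/-!
Common combinatorial framework for graphs cellularly embedded on orientable surfaces,
following Erickson, Fox, and Lkhamsuren, "Holiest Minimum-Cost Paths and Flows in
Surface Graphs".

A graph `G = (V, E, F)` embedded on an orientable surface is given combinatorially by a
finite set of darts together with a fixed-point-free involution `rev` (whose orbits are
the edges) and a permutation `next` (= π, whose orbits are the vertices); the faces are
the orbits of `rev ∘ next`, and the genus `g` is determined by Euler's formula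
`|V| - |E| + |F| = 2 - 2g`.
-/

noncomputable section

open Finset

open scoped Classical

set_option maxHeartbeats 1000000

structure CombSurface where
  /-- the darts -/
  D : Type
  /-- the vertices (orbits of `next`) -/
  V : Type
  /-- the faces (orbits of `rev ∘ next`) -/
  F : Type
  [finD : Fintype D]
  [deqD : DecidableEq D]
  [finV : Fintype V]
  [deqV : DecidableEq V]
  [finF : Fintype F]
  [deqF : DecidableEq F]
  /-- the reversal involution on darts; its orbits are the edges -/
  rev : D → D
  rev_invol : ∀ d, rev (rev d) = d
  rev_ne : ∀ d, rev d ≠ d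
  /-- the rotation permutation π: orbits are the darts directed into a common vertex,
  in counterclockwise order -/
  next : D → D
  next_bij : Function.Bijective next
  /-- the head of a dart: the orbit map of `next` -/
  head : D → V
  head_next : ∀ d, head (next d) = head d
  head_orbit : ∀ d₁ d₂, head d₁ = head d₂ → ∃ n : ℕ, next^[n] d₁ = d₂
  head_surj : Function.Surjective head
  /-- the face to the left of a dart: the orbit map of `rev ∘ next` -/
  left : D → F
  left_step : ∀ d, left (rev (next d)) = left d
  left_orbit : ∀ d₁ d₂, left d₁ = left d₂ → ∃ n : ℕ, (fun x => rev (next x))^[n] d₁ = d₂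
  left_surj : Function.Surjective left
  /-- the genus -/
  g : ℕ
  /-- Euler's formula `|V| - |E| + |F| = 2 - 2g` (with `2|E| = |D|`) -/
  euler : 2 * (Fintype.card V : ℤ) + 2 * (Fintype.card F : ℤ) - (Fintype.card D : ℤ)
      = 4 - 4 * (g : ℤ)

attribute [instance] CombSurface.finD CombSurface.deqD CombSurface.finV
  CombSurface.deqV CombSurface.finF CombSurface.deqF

namespace CombSurface

variable (S : CombSurface)

/-- The tail of a dart. -/
def tail (d : S.D) : S.V := S.head (S.rev d)

/-- The face to the right of a dart.  The dual dart of `d` crosses `d` from the face on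
its left to the face on its right; i.e. the dual dart of `d` has tail `S.left d` and
head `S.right d`. -/
def right (d : S.D) : S.F := S.left (S.rev d)

/-- The imbalance of a flow `f` at a vertex `v`: the net flow into `v`. -/
def imbalance (f : S.D → ℝ) (v : S.V) : ℝ :=
  ∑ d ∈ univ.filter (fun d => S.head d = v), f d -
    ∑ d ∈ univ.filter (fun d => S.tail d = v), f d

/-- `f` is the boundary flow of the potential function `α` on the faces. -/
def IsBoundary (f : S.D → ℝ) (α : S.F → ℝ) : Prop :=
  ∀ d, f d - f (S.rev d) = α (S.right d) - α (S.left d)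

/-- The dual imbalance of a dual flow `z` at a face `p`: the sum of `z` over all darts
whose dual darts have head `p`. -/
def dualImbalance (z : S.D → ℝ) (p : S.F) : ℝ :=
  ∑ d ∈ univ.filter (fun d => S.right d = p), z d

/-- A drainage with sink `r`: an antisymmetric dual flow whose dual imbalance is negative
at every face other than `r`. -/
def IsDrainage (z : S.D → ℝ) (r : S.F) : Prop :=
  (∀ d, z (S.rev d) = - z d) ∧ ∀ q, q ≠ r → S.dualImbalance z q < 0

/-- A set of darts closed under reversal (i.e. a set of edges). -/
def RevClosed (A : Finset S.D) : Prop := ∀ d ∈ A, S.rev d ∈ A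

/-- The edge set `A` connects all vertices of the primal graph. -/
def PrimalConnected (A : Finset S.D) : Prop :=
  ∀ v w : S.V, Relation.ReflTransGen (fun a b => ∃ d ∈ A, S.tail d = a ∧ S.head d = b) v w

/-- The edge set `A` connects all vertices of the dual graph (i.e. the faces). -/
def DualConnected (A : Finset S.D) : Prop :=
  ∀ p q : S.F, Relation.ReflTransGen (fun a b => ∃ d ∈ A, S.left d = a ∧ S.right d = b) p q

/-- A spanning tree of `G`: a connected spanning set of edges with `|V| - 1` edges. -/
def IsSpanningTree (A : Finset S.D) : Prop :=
  S.RevClosed A ∧ S.PrimalConnected A ∧ A.card = 2 * (Fintype.card S.V - 1)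

/-- A spanning cotree of `G`: a set of edges forming a spanning tree of the dual graph. -/
def IsSpanningCotree (A : Finset S.D) : Prop :=
  S.RevClosed A ∧ S.DualConnected A ∧ A.card = 2 * (Fintype.card S.F - 1)

/-- The clockwise neighborhood `∂⁻(F')` of a set of faces: all darts whose dual darts
have tail outside `F'` and head inside `F'`. -/
def cwBoundary (F' : Finset S.F) : Finset S.D :=
  univ.filter fun d => S.left d ∉ F' ∧ S.right d ∈ F'

end CombSurface

/-- A tree–cotree decomposition of `G`: a partition of the edges into a spanning tree `T`,
a spanning cotree `C`, and a set `L` of leftover edges. -/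
structure TreeCotree (S : CombSurface) where
  T : Finset S.D
  L : Finset S.D
  C : Finset S.D
  tree : S.IsSpanningTree T
  cotree : S.IsSpanningCotree C
  revL : S.RevClosed L
  disjTL : Disjoint T L
  disjTC : Disjoint T C
  disjLC : Disjoint L C
  cover : T ∪ L ∪ C = Finset.univ

/-- Homology signature data: a tree–cotree decomposition `(T, L, C)` together with an
ordering `ell 1, …, ell 2g` of (oriented) leftover edges of `L` and, for each `i`, the
oriented dual fundamental cycle `cyc i` of the edge of `ell i` with the cotree `C`,
represented as the `{-1,0,1}`-valued dual circulation supported on `C + ell i` that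
traverses the dart `ell i` (positively).  The homology signature of a dart `d` is the
integer vector `[d] = fun i => cyc i d`. -/
structure HomologyBasis (S : CombSurface) extends TreeCotree S where
  /-- the `i`-th leftover edge, oriented -/
  ell : Fin (2 * S.g) → S.D
  ell_mem : ∀ i, ell i ∈ L
  ell_inj : ∀ i j, (ell i = ell j ∨ ell i = S.rev (ell j)) → i = j
  ell_cover : ∀ d ∈ L, ∃ i, d = ell i ∨ d = S.rev (ell i)
  /-- the oriented dual fundamental cycle of `ell i` with the cotree `C`,
  as a dual circulation -/
  cyc : Fin (2 * S.g) → S.D → ℤ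
  cyc_antisym : ∀ i d, cyc i (S.rev d) = - cyc i d
  cyc_le_one : ∀ i d, |cyc i d| ≤ 1
  cyc_circ : ∀ i p, (∑ d ∈ univ.filter (fun d => S.right d = p), cyc i d) = 0
  cyc_supp : ∀ i d, cyc i d ≠ 0 → d ∈ C ∨ d = ell i ∨ d = S.rev (ell i)
  cyc_ell : ∀ i, cyc i (ell i) = 1

/-- The homology signature `[f]` of a flow `f`: `[f] = ∑ d, f d • [d]`. -/
def flowSig (S : CombSurface) (H : HomologyBasis S) (f : S.D → ℝ) : Fin (2 * S.g) → ℝ :=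
  fun i => ∑ d, f d * (H.cyc i d : ℝ)

/-- Strict lexicographic comparison of cost vectors. -/
def lexLt {n : ℕ} (a b : Fin n → ℝ) : Prop :=
  ∃ i, (∀ j, j < i → a j = b j) ∧ a i < b i

/-- Lexicographic comparison of cost vectors. -/
def lexLe {n : ℕ} (a b : Fin n → ℝ) : Prop := lexLt a b ∨ a = b

/-- The perturbed cost of a dart under the full lexicographic perturbation scheme:
`c'(d) = (c(d), 1) ++ [d] ++ (z(d))`. -/
def dartCostFull (S : CombSurface) (H : HomologyBasis S) (z : S.D → ℝ) (c : S.D → ℝ)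
    (d : S.D) : Fin (2 * S.g + 3) → ℝ :=
  Fin.cons (c d) (Fin.cons 1 (Fin.snoc (fun i => (H.cyc i d : ℝ)) (z d)))

/-- The perturbed cost of a dart under the modified lexicographic perturbation scheme
(no `+1` component): `c'(d) = (c(d)) ++ [d] ++ (z(d))`. -/
def dartCostMod (S : CombSurface) (H : HomologyBasis S) (z : S.D → ℝ) (c : S.D → ℝ)
    (d : S.D) : Fin (2 * S.g + 2) → ℝ :=
  Fin.cons (c d) (Fin.snoc (fun i => (H.cyc i d : ℝ)) (z d))

/-- The perturbed cost of a flow: `c'(f) = ∑ d, f d • c'(d)`. -/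
def flowCostFull (S : CombSurface) (H : HomologyBasis S) (z : S.D → ℝ) (c : S.D → ℝ)
    (f : S.D → ℝ) : Fin (2 * S.g + 3) → ℝ :=
  ∑ d, f d • dartCostFull S H z c d

/-- The unperturbed part of a cost vector from the modified scheme (first component). -/
def basePart {g : ℕ} (w : Fin (2 * g + 2) → ℝ) : ℝ := w ⟨0, by omega⟩

/-- The homology part of a cost vector from the modified scheme (middle `2g` components). -/
def homPart {g : ℕ} (w : Fin (2 * g + 2) → ℝ) : Fin (2 * g) → ℝ :=
  fun i => w ⟨(i : ℕ) + 1, by have := i.isLt; omega⟩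

/-- The face part of a cost vector from the modified scheme (last component). -/
def facePart {g : ℕ} (w : Fin (2 * g + 2) → ℝ) : ℝ := w ⟨2 * g + 1, by omega⟩

/-- Feasibility of a flow with respect to dart capacities `μ` and vertex demands `b`. -/
def Feasible (S : CombSurface) (μ : S.D → ENNReal) (b : S.V → ℝ) (f : S.D → ℝ) : Prop :=
  (∀ d, 0 ≤ f d ∧ ENNReal.ofReal (f d) ≤ μ d) ∧ ∀ v, S.imbalance f v = b v

/-- A minimum-cost feasible flow with respect to the perturbed costs `c'`, capacities `μ`,
and demands `b`, where costs are compared lexicographically. -/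
def IsMinCostFlow (S : CombSurface) (H : HomologyBasis S) (z : S.D → ℝ) (c : S.D → ℝ)
    (μ : S.D → ENNReal) (b : S.V → ℝ) (f : S.D → ℝ) : Prop :=
  Feasible S μ b f ∧ ∀ f', Feasible S μ b f' →
    lexLe (flowCostFull S H z c f) (flowCostFull S H z c f')

/-- `IsWalk S s t P`: the list of darts `P` is a directed walk from `s` to `t`. -/
def IsWalk (S : CombSurface) : S.V → S.V → List S.D → Prop
  | s, t, [] => s = t
  | s, t, d :: P => S.tail d = s ∧ IsWalk S (S.head d) t P

/-- `IsDualWalk S p q P`: the list of darts `P` is a directed walk from face `p` to face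
`q` in the dual graph. -/
def IsDualWalk (S : CombSurface) : S.F → S.F → List S.D → Prop
  | p, q, [] => p = q
  | p, q, d :: P => S.left d = p ∧ IsDualWalk S (S.right d) q P

/-- The cost vector of a walk: the sum of the cost vectors of its darts. -/
def pathCost {n : ℕ} (S : CombSurface) (cp : S.D → Fin n → ℝ) (P : List S.D) :
    Fin n → ℝ :=
  (P.map cp).sum

/-- `P` is a lexicographically shortest directed walk from `s` to `t` with respect to the
vector-valued dart costs `cp`. -/
def IsShortestWalk {n : ℕ} (S : CombSurface) (cp : S.D → Fin n → ℝ) (s t : S.V)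
    (P : List S.D) : Prop :=
  IsWalk S s t P ∧ ∀ Q, IsWalk S s t Q → lexLe (pathCost S cp P) (pathCost S cp Q)

/-- A list of darts viewed as a flow: each dart receives the number of times it occurs. -/
def listFlow (S : CombSurface) (P : List S.D) : S.D → ℝ := fun d => (P.count d : ℝ)

/-- The parent map of a spanning cotree rooted at `r`, given the successor darts. -/
def parentOfSucc (S : CombSurface) (r : S.F) (succ : S.F → S.D) (p : S.F) : S.F :=
  if p = r then r else S.right (succ p)

/-- The descendants of a face `p` in the cotree rooted at `r` (including `p` itself). -/
def descendants (S : CombSurface) (r : S.F) (succ : S.F → S.D) (p : S.F) :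
    Finset S.F :=
  univ.filter fun o => ∃ m : ℕ, (parentOfSucc S r succ)^[m] o = p

/-- The dual flow sending one unit of flow from every face to `r` along the cotree:
on a successor dart `succ p` its value is the number of descendants of `p`, on the
reversal of a successor dart it is the negation of that number, and on darts whose edges
are not in the cotree it is `0`. -/
def treeDrainage (S : CombSurface) (r : S.F) (succ : S.F → S.D) (d : S.D) : ℝ :=
  if ∃ p, p ≠ r ∧ succ p = d then ((descendants S r succ (S.left d)).card : ℝ)
  else if ∃ p, p ≠ r ∧ succ p = S.rev d then
    -((descendants S r succ (S.left (S.rev d))).card : ℝ)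
  else 0

/-- `RedOf S pred v u x`: in the tree rooted at `v` with predecessor darts `pred`, the
tree path from `v` to `x` passes through `u` (when `pred u` is the dart `v→u`, this says
exactly that the tree path from `v` to `x` uses the dart `v→u`, i.e. `x` is red). -/
def RedOf (S : CombSurface) (pred : S.V → S.D) (v u x : S.V) : Prop :=
  ∃ m : ℕ, (fun y => if y = v then v else S.tail (pred y))^[m] x = u

/-- The darts of the tree determined by the predecessor darts `pred` (both orientations
of each tree edge). -/
def predDarts (S : CombSurface) (pred : S.V → S.D) (v : S.V) : Set S.D :=
  {d | ∃ x, x ≠ v ∧ (pred x = d ∨ pred x = S.rev d)}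

/-- A shortest path tree rooted at `v` with respect to vector-valued dart costs `cost`,
together with the (lexicographic) shortest path distances: every non-root vertex has a
tense predecessor dart, all darts have non-negative slack, and the predecessor darts form
a tree reaching back to the root. -/
structure SPTree (S : CombSurface) {n : ℕ} (cost : S.D → Fin n → ℝ) (v : S.V) where
  pred : S.V → S.D
  dist : S.V → Fin n → ℝ
  dist_root : dist v = 0
  pred_head : ∀ x, x ≠ v → S.head (pred x) = x
  pred_tense : ∀ x, x ≠ v → dist x = dist (S.tail (pred x)) + cost (pred x)
  slack_nonneg : ∀ d, lexLe (dist (S.head d)) (dist (S.tail d) + cost d)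
  reach : ∀ x, ∃ m : ℕ, (fun y => if y = v then v else S.tail (pred y))^[m] x = v

namespace SPTree

variable {S : CombSurface} {n : ℕ} {cost : S.D → Fin n → ℝ} {v : S.V}

/-- The slack of a dart: `slack(x→y) = dist(x) + cost(x→y) − dist(y)`. -/
def slack (T : SPTree S cost v) (d : S.D) : Fin n → ℝ :=
  T.dist (S.tail d) + cost d - T.dist (S.head d)

/-- A vertex `x` is red if the tree path from the root `v` to `x` uses the dart `v→u`;
here `u` is the head of that dart. -/
def Red (T : SPTree S cost v) (u x : S.V) : Prop := RedOf S T.pred v u x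

/-- A dart is active if its tail is blue and its head is red. -/
def Active (T : SPTree S cost v) (u : S.V) (d : S.D) : Prop :=
  ¬ T.Red u (S.tail d) ∧ T.Red u (S.head d)

/-- The darts of the shortest path tree (both orientations of each tree edge). -/
def treeDarts (T : SPTree S cost v) : Set S.D := predDarts S T.pred v

end SPTree

/-- `K` realizes the fundamental cycle of the dart `d` with the tree whose darts are
`TD`: the concatenation `d :: K` is a simple closed walk whose non-`d` darts all lie in
the tree. -/
def IsFundCycleWalk (S : CombSurface) (TD : Set S.D) (d : S.D) (K : List S.D) : Prop :=
  IsWalk S (S.head d) (S.tail d) K ∧ (∀ e ∈ K, e ∈ TD) ∧ ((d :: K).map S.head).Nodup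

/-- The homology signature of the fundamental cycle `d :: K`. -/
def cycleSig (S : CombSurface) (H : HomologyBasis S) (d : S.D) (K : List S.D) :
    Fin (2 * S.g) → ℝ :=
  fun i => (H.cyc i d : ℝ) + (K.map fun e => (H.cyc i e : ℝ)).sum

/-- `Y` is a subgraph of the cut graph `X` in which every incident dual vertex other than
`q` and `r` has degree at least 2. -/
def IsCore (S : CombSurface) (X : Set S.D) (q r : S.F) (Y : Set S.D) : Prop :=
  Y ⊆ X ∧ (∀ d ∈ Y, S.rev d ∈ Y) ∧
    ∀ d ∈ Y, S.left d ≠ q → S.left d ≠ r → ∃ d' ∈ Y, d' ≠ d ∧ S.left d' = S.left d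

/-- The 2-core of the cut graph `X` (keeping `q` and `r`): the largest subgraph in which
every dual vertex other than `q` and `r` has degree at least 2; equivalently, the result
of repeatedly deleting degree-1 dual vertices other than `q` and `r`. -/
def twoCore (S : CombSurface) (X : Set S.D) (q r : S.F) : Set S.D :=
  ⋃₀ {Y | IsCore S X q r Y}

/-- An oriented cut path of the 2-core `X2`: a directed dual path whose darts lie in `X2`
and whose internal dual vertices are not `q` or `r` and have degree exactly 2 in `X2`. -/
def IsCutPath (S : CombSurface) (X2 : Set S.D) (q r : S.F) (P : List S.D) : Prop :=
  (∀ d ∈ P, d ∈ X2) ∧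
    P.Chain' fun d₁ d₂ => S.right d₁ = S.left d₂ ∧ S.right d₁ ≠ q ∧ S.right d₁ ≠ r ∧
      ∀ e ∈ X2, S.left e = S.right d₁ → e = S.rev d₁ ∨ e = d₂

/-- `L` is the clockwise facial walk around the face `p` (cyclically closed). -/
def IsFacialCycle (S : CombSurface) (p : S.F) (L : List S.D) : Prop :=
  L ≠ [] ∧ (∀ d ∈ L, S.left d = p) ∧
    List.Chain' (fun d₁ d₂ => d₂ = S.rev (S.next d₁)) (L ++ L.take 1)

/-- Elementary combinatorial homotopy moves in the surface punctured at the faces `o` and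
`r`, where the first endpoint of a walk may additionally slide forward or backward along
the fixed walk `R` (the walk `u₁→u₂→⋯→u_{k-1}`): removal/insertion of a spur, exchanging
two arcs that together bound a face other than `o` and `r`, and sliding the initial
endpoint along `R`. -/
inductive RHStep (S : CombSurface) (o r : S.F) (R : List S.D) :
    List S.D → List S.D → Prop where
  | spur (P Q : List S.D) (d : S.D) :
      RHStep S o r R (P ++ d :: S.rev d :: Q) (P ++ Q)
  | face (P Q A B : List S.D) (p : S.F) (hpo : p ≠ o) (hpr : p ≠ r)
      (hface : IsFacialCycle S p (A ++ (B.reverse.map S.rev))) :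
      RHStep S o r R (P ++ A ++ Q) (P ++ B ++ Q)
  | slide (P : List S.D) (d : S.D) (hd : d ∈ R) :
      RHStep S o r R (d :: P) P

/-- Restricted homotopy of walks with respect to a dart whose left face is `o`: homotopy
in the surface punctured at `o` and `r`, where the first endpoint may move forward or
backward along the walk `R`. -/
def RHomotopic (S : CombSurface) (o r : S.F) (R : List S.D) (P₁ P₂ : List S.D) : Prop :=
  Relation.EqvGen (RHStep S o r R) P₁ P₂

/-!
The difference `δ = f₁ - f₂` has zero imbalance, and any flow `σ` with zero imbalance, lying
between `0` and `δ` and with `c'(σ) ≠ 0`, does the job: `f₁ - σ` and `f₂ + σ` lie between `f₁` and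
`f₂`, so both are feasible, and their costs are `c'(f₁) - c'(σ)` and `c'(f₂) + c'(σ)`.
If `c'(δ) ≠ 0`, take `σ = δ`. Otherwise the signature of `δ` vanishes, so a tree–cotree argument
makes `δ` the boundary of a face potential `α`: `δ d - δ (rev d) = α (right d) - α (left d)`.
If `α` is constant, `δ` is symmetric on every edge, and `δ` restricted to one edge has a nonzero
`+1` cost component. Otherwise, after possibly exchanging `f₁` and `f₂`, `α` exceeds `α r`
somewhere; clipping `α` from below at `α r` gives a potential `φ ≥ 0` with `φ r = 0` that is the
boundary of an edgewise rescaling `σ` of `δ`, and the drainage component of `c'(σ)` is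
`∑ p, φ p * ∂*z p < 0`.
-/

theorem lexLt_sub_or_lexLt_add {n : ℕ} {w : Fin n → ℝ} (hw : w ≠ 0) (x y : Fin n → ℝ) :
    lexLt (x - w) x ∨ lexLt (y + w) y := by
  -- `lexLt` is `<` on the ordered group `Lex (Fin n → ℝ)`
  change toLex x - toLex w < toLex x ∨ toLex y + toLex w < toLex y
  rcases lt_or_gt_of_ne (toLex_eq_zero.not.2 hw) with h | h
  · exact Or.inr (add_lt_of_neg_right _ h)
  · exact Or.inl (sub_lt_self _ h)

theorem max_sub_max_mem_uIcc (x y c : ℝ) : max x c - max y c ∈ Set.uIcc 0 (x - y) := by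
  have habs := abs_le.1 (abs_max_sub_max_le_abs x y c)
  rw [Set.mem_uIcc]
  rcases le_total x y with h | h
  · rw [abs_of_nonpos (sub_nonpos.2 h)] at habs
    exact Or.inr ⟨by linarith, sub_nonpos.2 (max_le_max_right c h)⟩
  · rw [abs_of_nonneg (sub_nonneg.2 h)] at habs
    exact Or.inl ⟨sub_nonneg.2 (max_le_max_right c h), habs.2⟩

theorem div_mem_Icc_of_mem_uIcc {a b : ℝ} (h : b ∈ Set.uIcc 0 a) : b / a ∈ Set.Icc 0 1 := by
  rcases Set.mem_uIcc.1 h with ⟨h0, hb⟩ | ⟨ha, h0⟩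
  · exact ⟨div_nonneg h0 (h0.trans hb), div_le_one_of_le₀ hb (h0.trans hb)⟩
  · exact ⟨div_nonneg_of_nonpos h0 (ha.trans h0), div_le_one_of_ge ha (ha.trans h0)⟩

theorem mul_mem_uIcc_zero {t : ℝ} (ht : t ∈ Set.Icc 0 1) (x : ℝ) : t * x ∈ Set.uIcc 0 x := by
  rw [Set.mem_uIcc]
  rcases le_total 0 x with h | h
  · exact Or.inl ⟨mul_nonneg ht.1 h, mul_le_of_le_one_left h ht.2⟩
  · exact Or.inr ⟨by nlinarith [ht.1, ht.2], mul_nonpos_of_nonneg_of_nonpos ht.1 h⟩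

namespace CombSurface

variable {S : CombSurface}

theorem left_rev (d : S.D) : S.left (S.rev d) = S.right d := rfl

theorem right_rev (d : S.D) : S.right (S.rev d) = S.left d := by
  simp only [right, S.rev_invol]

theorem sum_comp_rev {M : Type*} [AddCommMonoid M] (g : S.D → M) :
    ∑ d, g (S.rev d) = ∑ d, g d :=
  Fintype.sum_equiv (Function.Involutive.toPerm S.rev S.rev_invol) _ _ fun _ => rfl

theorem sum_sub_comp_rev_mul {k : S.D → ℝ} (hk : ∀ d, k (S.rev d) = -k d) (g : S.D → ℝ) :
    ∑ d, (g d - g (S.rev d)) * k d = 2 * ∑ d, g d * k d := by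
  have : ∑ d, g (S.rev d) * k d = -∑ d, g d * k d := by
    rw [← sum_comp_rev (fun d => g d * k d), ← Finset.sum_neg_distrib]
    simp only [hk, mul_neg, neg_neg]
  rw [Finset.sum_congr rfl fun d _ => sub_mul _ _ _, Finset.sum_sub_distrib, this]
  ring

theorem sum_mul_sub_comp_rev {X : Type*} [Fintype X] [DecidableEq X] {k : S.D → ℝ}
    (hk : ∀ d, k (S.rev d) = -k d) (h : S.D → X) (φ : X → ℝ) :
    ∑ d, (φ (h d) - φ (h (S.rev d))) * k d =
      2 * ∑ x, φ x * ∑ d ∈ univ.filter (fun d => h d = x), k d := by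
  rw [sum_sub_comp_rev_mul hk (fun d => φ (h d)), ← Finset.sum_fiberwise univ h]
  congr 1
  refine Finset.sum_congr rfl fun x _ => ?_
  rw [Finset.mul_sum]
  exact Finset.sum_congr rfl fun d hd => by rw [(Finset.mem_filter.1 hd).2]

section Trees

variable (S) {X : Type*} [DecidableEq X]

/-- `A` is the set of darts of a spanning tree on `U`, the dart `d` running from `h (rev d)` to
`h d`: with `h = head` this is a tree of the graph, with `h = right` a tree of its dual. -/
structure IsTreeOn (h : S.D → X) (U : Finset X) (A : Finset S.D) : Prop where
  rev_mem : ∀ d ∈ A, S.rev d ∈ A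
  head_mem : ∀ d ∈ A, h d ∈ U
  connected : ∀ x ∈ U, ∀ y ∈ U,
    Relation.ReflTransGen (fun x y => ∃ d ∈ A, h (S.rev d) = x ∧ h d = y) x y
  card_eq : A.card = 2 * (U.card - 1)

variable {S} {h : S.D → X} {U : Finset X} {A : Finset S.D}

namespace IsTreeOn

theorem exists_leaf (hT : S.IsTreeOn h U A) (hU : 2 ≤ U.card) :
    ∃ d₀ ∈ A, ∀ d ∈ A, h d = h d₀ → d = d₀ := by
  -- fewer than `2 |U|` darts, so some vertex is the head of at most one of them
  obtain ⟨u, hu, hdeg⟩ := Finset.exists_card_fiber_lt_of_card_lt_mul (s := A) (t := U) (f := h)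
    (n := 2) (by rw [hT.card_eq]; omega)
  obtain ⟨w, hw, hwu⟩ := Finset.exists_mem_ne (by omega : 1 < U.card) u
  obtain ⟨-, ⟨d, hdA, hdu, -⟩, -⟩ :=
    (Relation.ReflTransGen.cases_head (hT.connected u hu w hw)).resolve_left hwu.symm
  have hmem : S.rev d ∈ A.filter (fun e => h e = u) := Finset.mem_filter.2 ⟨hT.rev_mem d hdA, hdu⟩
  obtain ⟨d₀, hd₀⟩ := Finset.card_eq_one.1 (le_antisymm (by omega) (Finset.card_pos.2 ⟨_, hmem⟩))
  have hd₀u := Finset.mem_filter.1 (hd₀ ▸ Finset.mem_singleton_self d₀)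
  refine ⟨d₀, hd₀u.1, fun e he heu => ?_⟩
  have : e ∈ A.filter (fun e => h e = u) := Finset.mem_filter.2 ⟨he, heu.trans hd₀u.2⟩
  rwa [hd₀, Finset.mem_singleton] at this

theorem erase_leaf (hT : S.IsTreeOn h U A) {d₀ : S.D} (hd₀ : d₀ ∈ A)
    (hleaf : ∀ d ∈ A, h d = h d₀ → d = d₀) :
    S.IsTreeOn h (U.erase (h d₀)) ((A.erase d₀).erase (S.rev d₀)) := by
  have hleaf' : ∀ d ∈ A, h (S.rev d) = h d₀ → d = S.rev d₀ := fun d hd hdu => by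
    rw [← hleaf _ (hT.rev_mem d hd) hdu, S.rev_invol]
  have hne : h (S.rev d₀) ≠ h d₀ := fun heq => S.rev_ne d₀ (hleaf _ (hT.rev_mem d₀ hd₀) heq)
  have hmem : ∀ d, d ∈ (A.erase d₀).erase (S.rev d₀) ↔ d ∈ A ∧ d ≠ d₀ ∧ d ≠ S.rev d₀ := by
    intro d; simp only [Finset.mem_erase]; tauto
  refine ⟨fun d hd => ?_, fun d hd => ?_, fun x hx y hy => ?_, ?_⟩
  · obtain ⟨hdA, h1, h2⟩ := (hmem d).1 hd
    refine (hmem _).2 ⟨hT.rev_mem d hdA, fun e => h2 ?_, fun e => h1 ?_⟩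
    · rw [← e, S.rev_invol]
    · rw [← S.rev_invol d, e, S.rev_invol]
  · obtain ⟨hdA, h1, -⟩ := (hmem d).1 hd
    exact Finset.mem_erase.2 ⟨fun e => h1 (hleaf d hdA e), hT.head_mem d hdA⟩
  · -- a walk through the leaf `h d₀` enters and leaves it along the same edge
    set ρ : X → X := fun x => if x = h d₀ then h (S.rev d₀) else x
    have hρ : ∀ x ∈ U.erase (h d₀), ρ x = x := fun x hx => if_neg (Finset.ne_of_mem_erase hx)
    have hstep : (fun x y => ∃ d ∈ A, h (S.rev d) = x ∧ h d = y) ≤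
        Function.onFun (Relation.ReflTransGen fun x y =>
          ∃ d ∈ (A.erase d₀).erase (S.rev d₀), h (S.rev d) = x ∧ h d = y) ρ := by
      rintro a b ⟨d, hdA, rfl, rfl⟩
      by_cases h1 : d = d₀
      · subst h1; simp only [Function.onFun, ρ, if_neg hne, if_pos rfl]; exact .refl
      by_cases h2 : d = S.rev d₀
      · subst h2; simp only [Function.onFun, ρ, S.rev_invol, if_neg hne, if_pos rfl]; exact .refl
      have ha : h (S.rev d) ≠ h d₀ := fun e => h2 (hleaf' d hdA e)
      have hb : h d ≠ h d₀ := fun e => h1 (hleaf d hdA e)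
      simp only [Function.onFun, ρ, if_neg ha, if_neg hb]
      exact Relation.ReflTransGen.single ⟨d, (hmem d).2 ⟨hdA, h1, h2⟩, rfl, rfl⟩
    have key := Relation.ReflTransGen.lift' ρ hstep x y
      (hT.connected x (Finset.mem_of_mem_erase hx) y (Finset.mem_of_mem_erase hy))
    simpa only [Function.onFun, hρ x hx, hρ y hy] using key
  · have hrA : S.rev d₀ ∈ A.erase d₀ := Finset.mem_erase.2 ⟨S.rev_ne d₀, hT.rev_mem d₀ hd₀⟩
    rw [Finset.card_erase_of_mem hrA, Finset.card_erase_of_mem hd₀, hT.card_eq,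
      Finset.card_erase_of_mem (hT.head_mem d₀ hd₀)]
    omega

theorem exists_potential (hT : S.IsTreeOn h U A) {a : S.D → ℝ} (ha : ∀ d, a (S.rev d) = -a d) :
    ∃ α : X → ℝ, ∀ d ∈ A, a d = α (h d) - α (h (S.rev d)) := by
  induction U using Finset.strongInduction generalizing A with
  | H U ih =>
  by_cases hU : U.card < 2
  · have : A = ∅ := Finset.card_eq_zero.1 (by rw [hT.card_eq]; omega)
    exact ⟨0, by simp [this]⟩
  obtain ⟨d₀, hd₀, hleaf⟩ := hT.exists_leaf (by omega)
  obtain ⟨α, hα⟩ := ih _ (Finset.erase_ssubset (hT.head_mem d₀ hd₀)) (hT.erase_leaf hd₀ hleaf)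
  have hne : h (S.rev d₀) ≠ h d₀ := fun heq => S.rev_ne d₀ (hleaf _ (hT.rev_mem d₀ hd₀) heq)
  refine ⟨Function.update α (h d₀) (α (h (S.rev d₀)) + a d₀), fun d hd => ?_⟩
  by_cases h1 : d = d₀
  · subst h1; simp [Function.update_of_ne hne]
  by_cases h2 : d = S.rev d₀
  · subst h2; simp [Function.update_of_ne hne, S.rev_invol, ha]
  have hd' : d ∈ (A.erase d₀).erase (S.rev d₀) := by simp [Finset.mem_erase, *]
  have hb : h d ≠ h d₀ := fun e => h1 (hleaf d hd e)
  have hc : h (S.rev d) ≠ h d₀ := fun e => h2 (by rw [← hleaf _ (hT.rev_mem d hd) e, S.rev_invol])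
  rw [Function.update_of_ne hb, Function.update_of_ne hc]
  exact hα d hd'

theorem eq_zero_of_circulation [Fintype X] (hT : S.IsTreeOn h U A) {β : S.D → ℝ}
    (hanti : ∀ d, β (S.rev d) = -β d) (hsupp : ∀ d ∉ A, β d = 0)
    (hcirc : ∀ x, ∑ d ∈ univ.filter (fun d => h d = x), β d = 0) (d : S.D) : β d = 0 := by
  obtain ⟨φ, hφ⟩ := hT.exists_potential hanti
  have hsq : ∑ e, β e * β e = 0 := by
    calc ∑ e, β e * β e = ∑ e, (φ (h e) - φ (h (S.rev e))) * β e := by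
          refine Finset.sum_congr rfl fun e _ => ?_
          by_cases he : e ∈ A
          · rw [← hφ e he]
          · simp [hsupp e he]
      _ = 0 := by simp [sum_mul_sub_comp_rev hanti, hcirc]
  exact mul_self_eq_zero.1 <|
    (Finset.sum_eq_zero_iff_of_nonneg fun e _ => mul_self_nonneg (β e)).1 hsq d (Finset.mem_univ d)

end IsTreeOn

end Trees

theorem IsSpanningTree.isTreeOn {T : Finset S.D} (hT : S.IsSpanningTree T) :
    S.IsTreeOn S.head univ T :=
  ⟨hT.1, fun _ _ => Finset.mem_univ _, fun x _ y _ => hT.2.1 x y,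
    by rw [hT.2.2, Finset.card_univ]⟩

theorem IsSpanningCotree.isTreeOn {C : Finset S.D} (hC : S.IsSpanningCotree C) :
    S.IsTreeOn S.right univ C :=
  ⟨hC.1, fun _ _ => Finset.mem_univ _,
    fun p _ q _ => Relation.ReflTransGen.mono
      (fun _ _ ⟨d, hd, hl, hr⟩ => ⟨d, hd, by rw [right_rev, hl], hr⟩) _ _ (hC.2.1 p q),
    by rw [hC.2.2, Finset.card_univ]⟩

theorem imbalance_eq_sum_sub (f : S.D → ℝ) (v : S.V) :
    S.imbalance f v = ∑ d ∈ univ.filter (fun d => S.head d = v), (f d - f (S.rev d)) := by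
  rw [Finset.sum_sub_distrib, imbalance]
  congr 1
  simp only [Finset.sum_filter]
  rw [← sum_comp_rev]
  simp [tail, S.rev_invol]

theorem imbalance_add (f g : S.D → ℝ) (v : S.V) :
    S.imbalance (f + g) v = S.imbalance f v + S.imbalance g v := by
  simp only [imbalance, Pi.add_apply, Finset.sum_add_distrib]
  ring

theorem imbalance_sub (f g : S.D → ℝ) (v : S.V) :
    S.imbalance (f - g) v = S.imbalance f v - S.imbalance g v := by
  simp only [imbalance, Pi.sub_apply, Finset.sum_sub_distrib]
  ring

/-- Rotating the darts around `v` by `next` turns the face on the right of each into the face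
on the left of its predecessor. -/
theorem sum_right_eq_sum_left {M : Type*} [AddCommMonoid M] (ψ : S.F → M) (v : S.V) :
    ∑ d ∈ univ.filter (fun d => S.head d = v), ψ (S.right d) =
      ∑ d ∈ univ.filter (fun d => S.head d = v), ψ (S.left d) := by
  rw [Finset.sum_filter, Finset.sum_filter, ← (Equiv.ofBijective _ S.next_bij).sum_comp]
  simp [S.head_next, right, S.left_step]

theorem IsBoundary.imbalance_eq_zero {f : S.D → ℝ} {α : S.F → ℝ} (hf : S.IsBoundary f α)
    (v : S.V) : S.imbalance f v = 0 := by
  rw [imbalance_eq_sum_sub, Finset.sum_congr rfl fun d _ => hf d, Finset.sum_sub_distrib,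
    sum_right_eq_sum_left, sub_self]

theorem IsBoundary.neg {f : S.D → ℝ} {α : S.F → ℝ} (hf : S.IsBoundary f α) :
    S.IsBoundary (-f) (-α) := fun d => by
  simp only [Pi.neg_apply]
  linarith [hf d]

theorem IsBoundary.sum_mul_eq {σ z : S.D → ℝ} {φ : S.F → ℝ} (hσ : S.IsBoundary σ φ)
    (hz : ∀ d, z (S.rev d) = -z d) :
    ∑ d, σ d * z d = ∑ p, φ p * S.dualImbalance z p := by
  have h1 : ∑ d, (φ (S.right d) - φ (S.left d)) * z d = 2 * ∑ d, σ d * z d := by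
    rw [← sum_sub_comp_rev_mul hz]
    exact Finset.sum_congr rfl fun d _ => by rw [hσ d]
  have h2 := sum_mul_sub_comp_rev hz S.right φ
  simp only [right_rev] at h2
  simp only [dualImbalance]
  linarith

theorem sum_mul_dualImbalance_neg {z : S.D → ℝ} {r q : S.F} (hz : S.IsDrainage z r)
    {φ : S.F → ℝ} (hφ : ∀ p, 0 ≤ φ p) (hr : φ r = 0) (hq : 0 < φ q) :
    ∑ p, φ p * S.dualImbalance z p < 0 := by
  have hneg : ∀ p, p ≠ r → φ p * S.dualImbalance z p ≤ 0 := fun p hp =>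
    mul_nonpos_of_nonneg_of_nonpos (hφ p) (hz.2 p hp).le
  refine Finset.sum_neg' (fun p _ => ?_) ⟨q, Finset.mem_univ q, ?_⟩
  · by_cases hp : p = r
    · simp [hp, hr]
    · exact hneg p hp
  · exact mul_neg_of_pos_of_neg hq (hz.2 q fun h => by simp [h, hr] at hq)

/-- Scaling `δ` on each edge by the ratio of the increments of `φ` and `α` across it. -/
theorem IsBoundary.exists_isBoundary_mem_uIcc {δ : S.D → ℝ} {α φ : S.F → ℝ}
    (hδ : S.IsBoundary δ α) (hφ : ∀ p q, φ p - φ q ∈ Set.uIcc 0 (α p - α q)) :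
    ∃ σ, S.IsBoundary σ φ ∧ ∀ d, σ d ∈ Set.uIcc 0 (δ d) := by
  set t : S.D → ℝ := fun d => (φ (S.right d) - φ (S.left d)) / (α (S.right d) - α (S.left d))
  have ht : ∀ d, t (S.rev d) = t d := fun d => by
    simp only [t, right_rev, left_rev, ← neg_sub (φ (S.right d)), ← neg_sub (α (S.right d)),
      neg_div_neg_eq]
  refine ⟨fun d => t d * δ d, fun d => ?_,
    fun d => mul_mem_uIcc_zero (div_mem_Icc_of_mem_uIcc (hφ _ _)) _⟩
  show t d * δ d - t (S.rev d) * δ (S.rev d) = _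
  rw [ht, ← mul_sub, hδ d]
  exact div_mul_cancel_of_imp fun h => by simpa [h] using hφ (S.right d) (S.left d)

end CombSurface

namespace HomologyBasis

open CombSurface

variable {S : CombSurface} (H : HomologyBasis S)

theorem cyc_rev (i : Fin (2 * S.g)) (d : S.D) :
    (H.cyc i (S.rev d) : ℝ) = -(H.cyc i d : ℝ) := by
  rw [H.cyc_antisym, Int.cast_neg]

theorem eq_zero_of_mem_L {β : S.D → ℝ} (hβ : ∀ d, β (S.rev d) = -β d)
    (hC : ∀ d ∈ H.C, β d = 0) (hcyc : ∀ i, ∑ d, β d * H.cyc i d = 0) {d : S.D} (hd : d ∈ H.L) :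
    β d = 0 := by
  have hell : ∀ i, β (H.ell i) = 0 := fun i => by
    have h := hcyc i
    rw [Fintype.sum_eq_add (H.ell i) (S.rev (H.ell i)) (S.rev_ne _).symm fun e ⟨h1, h2⟩ => ?_]
      at h
    · rw [H.cyc_rev, H.cyc_ell, hβ] at h
      push_cast at h
      linarith
    by_cases he : H.cyc i e = 0
    · simp [he]
    · rcases H.cyc_supp i e he with heC | rfl | rfl
      · simp [hC e heC]
      · exact absurd rfl h1
      · exact absurd rfl h2
  obtain ⟨i, rfl | rfl⟩ := H.ell_cover d hd
  · exact hell i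
  · rw [hβ, hell, neg_zero]

/-- Since the signature of `δ` vanishes, the defect of the potential of `δ` along the cotree
vanishes on the leftover edges, hence is a circulation supported on the spanning tree. -/
theorem exists_isBoundary {δ : S.D → ℝ} (himb : ∀ v, S.imbalance δ v = 0)
    (hsig : flowSig S H δ = 0) : ∃ α, S.IsBoundary δ α := by
  set a : S.D → ℝ := fun d => δ d - δ (S.rev d)
  have ha : ∀ d, a (S.rev d) = -a d := fun d => by simp [a, S.rev_invol]
  obtain ⟨α, hα⟩ := H.cotree.isTreeOn.exists_potential ha
  set β : S.D → ℝ := fun d => α (S.right d) - α (S.left d) - a d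
  have hβ : ∀ d, β (S.rev d) = -β d := fun d => by simp only [β, right_rev, left_rev, ha]; ring
  have hβC : ∀ d ∈ H.C, β d = 0 := fun d hd => by simp [β, hα d hd, right_rev]
  have hβcyc : ∀ i, ∑ d, β d * H.cyc i d = 0 := fun i => by
    have hα0 := sum_mul_sub_comp_rev (k := fun d => (H.cyc i d : ℝ)) (H.cyc_rev i) S.right α
    have hδ0 := sum_sub_comp_rev_mul (k := fun d => (H.cyc i d : ℝ)) (H.cyc_rev i) δ
    simp only [right_rev, ← Int.cast_sum, H.cyc_circ, Int.cast_zero, mul_zero,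
      Finset.sum_const_zero] at hα0
    have hsig_i : ∑ d, δ d * H.cyc i d = 0 := congrFun hsig i
    simp only [β, sub_mul, Finset.sum_sub_distrib, a] at hα0 hδ0 ⊢
    linarith
  have hβsupp : ∀ d ∉ H.T, β d = 0 := fun d hdT => by
    have hd : d ∈ H.T ∪ H.L ∪ H.C := H.cover ▸ Finset.mem_univ d
    simp only [Finset.mem_union, hdT, false_or] at hd
    exact hd.elim (H.eq_zero_of_mem_L hβ hβC hβcyc) (hβC d)
  have hβcirc : ∀ v, ∑ d ∈ univ.filter (fun d => S.head d = v), β d = 0 := fun v => by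
    have h := himb v
    rw [imbalance_eq_sum_sub] at h
    simp only [β, a, Finset.sum_sub_distrib, sum_right_eq_sum_left] at h ⊢
    linarith
  refine ⟨α, fun d => ?_⟩
  have := H.tree.isTreeOn.eq_zero_of_circulation hβ hβsupp hβcirc d
  simp only [β, a] at this
  linarith

end HomologyBasis

section Costs

open CombSurface

variable {S : CombSurface} {H : HomologyBasis S} {z c : S.D → ℝ}

theorem flowCostFull_add (f g : S.D → ℝ) :
    flowCostFull S H z c (f + g) = flowCostFull S H z c f + flowCostFull S H z c g := by
  simp only [flowCostFull, Pi.add_apply, add_smul, Finset.sum_add_distrib]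

theorem flowCostFull_sub (f g : S.D → ℝ) :
    flowCostFull S H z c (f - g) = flowCostFull S H z c f - flowCostFull S H z c g := by
  simp only [flowCostFull, Pi.sub_apply, sub_smul, Finset.sum_sub_distrib]

theorem flowCostFull_apply_one (f : S.D → ℝ) : flowCostFull S H z c f 1 = ∑ d, f d := by
  simp [flowCostFull, Finset.sum_apply, dartCostFull]

theorem flowCostFull_apply_cyc (f : S.D → ℝ) (i : Fin (2 * S.g)) :
    flowCostFull S H z c f i.castSucc.succ.succ = flowSig S H f i := by
  simp [flowCostFull, Finset.sum_apply, dartCostFull, flowSig]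

theorem flowCostFull_apply_last (f : S.D → ℝ) :
    flowCostFull S H z c f (Fin.last _) = ∑ d, f d * z d := by
  simp [flowCostFull, Finset.sum_apply, dartCostFull, ← Fin.succ_last]

theorem flowSig_eq_zero_of_flowCostFull_eq_zero {f : S.D → ℝ} (hf : flowCostFull S H z c f = 0) :
    flowSig S H f = 0 :=
  funext fun i => by rw [← flowCostFull_apply_cyc (z := z) (c := c), hf]; rfl

end Costs

section Pushing

open CombSurface

variable {S : CombSurface} {H : HomologyBasis S} {z c : S.D → ℝ} {μ : S.D → ENNReal}
  {b : S.V → ℝ} {f₁ f₂ : S.D → ℝ}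

theorem Feasible.of_mem_uIcc (h₁ : Feasible S μ b f₁) (h₂ : Feasible S μ b f₂) {g : S.D → ℝ}
    (hg : ∀ d, g d ∈ Set.uIcc (f₁ d) (f₂ d)) (himb : ∀ v, S.imbalance g v = b v) :
    Feasible S μ b g := by
  refine ⟨fun d => ⟨(le_min (h₁.1 d).1 (h₂.1 d).1).trans (hg d).1, ?_⟩, himb⟩
  calc ENNReal.ofReal (g d) ≤ ENNReal.ofReal (max (f₁ d) (f₂ d)) :=
        ENNReal.ofReal_le_ofReal (hg d).2
    _ ≤ μ d := by rw [ENNReal.ofReal_max]; exact max_le (h₁.1 d).2 (h₂.1 d).2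

theorem exists_cheaper_of_mem_uIcc (h₁ : Feasible S μ b f₁) (h₂ : Feasible S μ b f₂)
    {σ : S.D → ℝ} (hσ : ∀ d, σ d ∈ Set.uIcc 0 (f₁ d - f₂ d)) (himb : ∀ v, S.imbalance σ v = 0)
    (hcost : flowCostFull S H z c σ ≠ 0) :
    ∃ f, Feasible S μ b f ∧
      (lexLt (flowCostFull S H z c f) (flowCostFull S H z c f₁) ∨
        lexLt (flowCostFull S H z c f) (flowCostFull S H z c f₂)) := by
  have hmem : ∀ d, (f₁ - σ) d ∈ Set.uIcc (f₁ d) (f₂ d) ∧ (f₂ + σ) d ∈ Set.uIcc (f₁ d) (f₂ d) := by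
    intro d
    have := hσ d
    simp only [Set.mem_uIcc, Pi.sub_apply, Pi.add_apply] at this ⊢
    constructor <;> rcases this with h | h <;>
      first | exact Or.inl ⟨by linarith, by linarith⟩ | exact Or.inr ⟨by linarith, by linarith⟩
  have hg₁ : Feasible S μ b (f₁ - σ) := h₁.of_mem_uIcc h₂ (fun d => (hmem d).1) fun v => by
    rw [imbalance_sub, himb, h₁.2, sub_zero]
  have hg₂ : Feasible S μ b (f₂ + σ) := h₁.of_mem_uIcc h₂ (fun d => (hmem d).2) fun v => by
    rw [imbalance_add, himb, h₂.2, add_zero]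
  rcases lexLt_sub_or_lexLt_add hcost (flowCostFull S H z c f₁) (flowCostFull S H z c f₂)
    with h | h
  · exact ⟨f₁ - σ, hg₁, Or.inl (by rwa [flowCostFull_sub])⟩
  · exact ⟨f₂ + σ, hg₂, Or.inr (by rwa [flowCostFull_add])⟩

theorem exists_cheaper_of_symm (h₁ : Feasible S μ b f₁) (h₂ : Feasible S μ b f₂)
    (hsymm : ∀ d, f₁ (S.rev d) - f₂ (S.rev d) = f₁ d - f₂ d) {e : S.D} (he : f₁ e ≠ f₂ e) :
    ∃ f, Feasible S μ b f ∧
      (lexLt (flowCostFull S H z c f) (flowCostFull S H z c f₁) ∨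
        lexLt (flowCostFull S H z c f) (flowCostFull S H z c f₂)) := by
  set σ : S.D → ℝ := fun d => if d = e ∨ d = S.rev e then f₁ d - f₂ d else 0
  have hσ : S.IsBoundary σ 0 := fun d => by
    have hrev : ∀ x y, S.rev x = y ↔ x = S.rev y := fun x y => by
      constructor <;> rintro rfl <;> simp [S.rev_invol]
    have : S.rev d = e ∨ S.rev d = S.rev e ↔ d = e ∨ d = S.rev e := by
      rw [hrev, hrev, S.rev_invol, or_comm]
    simp only [σ, this, hsymm, Pi.zero_apply, sub_self]
  refine exists_cheaper_of_mem_uIcc h₁ h₂ (σ := σ) (fun d => ?_) hσ.imbalance_eq_zero fun h0 => ?_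
  · by_cases hd : d = e ∨ d = S.rev e <;> simp [σ, hd]
  · have h := congrFun h0 1
    rw [flowCostFull_apply_one,
      Fintype.sum_eq_add e (S.rev e) (S.rev_ne e).symm fun d hd => if_neg (by tauto)] at h
    simp only [true_or, or_true, if_true, hsymm, Pi.zero_apply] at h
    exact he (by linarith)

theorem exists_cheaper_of_isBoundary_of_lt {r : S.F} (hz : S.IsDrainage z r)
    (h₁ : Feasible S μ b f₁) (h₂ : Feasible S μ b f₂) {α : S.F → ℝ}
    (hα : S.IsBoundary (f₁ - f₂) α) {q : S.F} (hq : α r < α q) :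
    ∃ f, Feasible S μ b f ∧
      (lexLt (flowCostFull S H z c f) (flowCostFull S H z c f₁) ∨
        lexLt (flowCostFull S H z c f) (flowCostFull S H z c f₂)) := by
  set φ : S.F → ℝ := fun p => max (α p) (α r) - α r
  obtain ⟨σ, hσφ, hσ⟩ := hα.exists_isBoundary_mem_uIcc (φ := φ) fun p q => by
    simpa [φ] using max_sub_max_mem_uIcc (α p) (α q) (α r)
  refine exists_cheaper_of_mem_uIcc h₁ h₂ hσ hσφ.imbalance_eq_zero fun h0 => ?_
  have hlast := congrFun h0 (Fin.last _)
  rw [flowCostFull_apply_last, hσφ.sum_mul_eq hz.1, Pi.zero_apply] at hlast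
  exact (sum_mul_dualImbalance_neg (q := q) hz (fun p => sub_nonneg.2 (le_max_right _ _))
    (by simp) (by simp [hq])).ne hlast

end Pushing

/-- Lemma 4 of the paper.  Let `f₁` and `f₂` be distinct feasible flows
with respect to capacities `μ` and demands `b`.  Then there exists a feasible flow `f`
such that at least one of `c'(f) < c'(f₁)` or `c'(f) < c'(f₂)` holds, where the perturbed
cost vectors are compared lexicographically. -/
theorem holiest_something_cheaper (S : CombSurface) (H : HomologyBasis S) (z : S.D → ℝ)
    (r : S.F) (hz : S.IsDrainage z r) (c : S.D → ℝ) (μ : S.D → ENNReal) (b : S.V → ℝ)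
    (f₁ f₂ : S.D → ℝ) (h₁ : Feasible S μ b f₁) (h₂ : Feasible S μ b f₂)
    (hne : f₁ ≠ f₂) :
    ∃ f, Feasible S μ b f ∧
      (lexLt (flowCostFull S H z c f) (flowCostFull S H z c f₁) ∨
        lexLt (flowCostFull S H z c f) (flowCostFull S H z c f₂)) := by
  have himb : ∀ v, S.imbalance (f₁ - f₂) v = 0 := fun v => by
    rw [CombSurface.imbalance_sub, h₁.2, h₂.2, sub_self]
  by_cases hcost : flowCostFull S H z c (f₁ - f₂) = 0
  swap
  · exact exists_cheaper_of_mem_uIcc h₁ h₂ (fun _ => Set.right_mem_uIcc) himb hcost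
  obtain ⟨α, hα⟩ := H.exists_isBoundary himb (flowSig_eq_zero_of_flowCostFull_eq_zero hcost)
  by_cases hconst : ∀ q, α q = α r
  · obtain ⟨e, he⟩ := Function.ne_iff.1 hne
    refine exists_cheaper_of_symm h₁ h₂ (fun d => ?_) he
    have := hα (S.rev d)
    simp only [hconst, sub_self, Pi.sub_apply, S.rev_invol] at this
    linarith
  obtain ⟨q, hq⟩ := not_forall.1 hconst
  rcases Ne.lt_or_gt hq with hlt | hgt
  · have hα' : S.IsBoundary (f₂ - f₁) (-α) := by rw [← neg_sub]; exact hα.neg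
    obtain ⟨f, hf, hcheaper⟩ := exists_cheaper_of_isBoundary_of_lt hz h₂ h₁ hα' (neg_lt_neg hlt)
    exact ⟨f, hf, hcheaper.symm⟩
  · exact exists_cheaper_of_isBoundary_of_lt hz h₁ h₂ hα hgt
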